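/- Let n be a natural number with n ≥ 1, let κ ∈ ℝ, and let f : ℝ → ℝ be continuous. Let φ : ℝ → ℝ → ℝ be C² on ℝ² and satisfy φ_t(t,z) + κ·φ_zz(t,z) + f(z)·φ_z(t,z) = 0 for all (t,z) ∈ ℝ². Suppose u : ℝ → ℝ → ℝ is C² on ℝ × (0,∞), u_r(t,r) ≠ 0 for all t ∈ ℝ and r > 0, and u satisfies the radial equation u_t(t,r) = κ·(u_rr(t,r) − ((n−1)/r)·u_r(t,r))/u_r(t,r)² + f(u(t,r)) for all t ∈ ℝ and r > 0 (the radial nonlinear diffusion–reaction equation in n dimensions with gradient diffusivity g(|u_r|) = −κ/u_r²). Define T(t,r) = r^(n−1)·φ(t, u(t,r)) and X(t,r) = κ·r^(n−1)·φ_z(t, u(t,r))/u_r(t,r). Then ∂T/∂t(t,r) + ∂X/∂r(t,r) = 0 for all t ∈ ℝ and r > 0. -/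

import Mathlib

/-! By the chain rule, `∂T/∂t = r^(n-1) (φ_t + u_t φ_z)` and, by the quotient rule,
`∂X/∂r = κ ((n-1)/r · r^(n-1) φ_z + r^(n-1) u_r φ_zz) / u_r - κ r^(n-1) φ_z u_rr / u_r²`.
Substituting the radial equation for `u_t`, the `u_rr` and `(n-1)/r` terms cancel and what is
left is `r^(n-1) (φ_t + κ φ_zz + f φ_z)`, which vanishes by the equation for `φ`. -/

noncomputable section

/-- Partial derivative in the first (time) variable. -/
def partial_t (u : ℝ → ℝ → ℝ) (t r : ℝ) : ℝ := deriv (fun s => u s r) t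

/-- Partial derivative in the second (space) variable. -/
def partial_r (u : ℝ → ℝ → ℝ) (t r : ℝ) : ℝ := deriv (fun s => u t s) r

/-- Second partial derivative in the second (space) variable. -/
def partial_rr (u : ℝ → ℝ → ℝ) (t r : ℝ) : ℝ := deriv (deriv (fun s => u t s)) r

/-- Mixed partial derivative: first in space, then in time. -/
def partial_tr (u : ℝ → ℝ → ℝ) (t r : ℝ) : ℝ := deriv (fun s => deriv (fun y => u s y) r) t

/-- `u` is C² on ℝ × (0,∞): `u`, `u_t`, `u_r`, `u_rr` and the mixed partial `u_tr`
exist and are continuous there. -/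
def IsC2On (u : ℝ → ℝ → ℝ) : Prop :=
  (∀ t r : ℝ, 0 < r → DifferentiableAt ℝ (fun s => u s r) t) ∧
  (∀ t r : ℝ, 0 < r → DifferentiableAt ℝ (fun s => u t s) r) ∧
  (∀ t r : ℝ, 0 < r → DifferentiableAt ℝ (deriv (fun s => u t s)) r) ∧
  (∀ t r : ℝ, 0 < r → DifferentiableAt ℝ (fun s => deriv (fun y => u s y) r) t) ∧
  ContinuousOn (fun q : ℝ × ℝ => u q.1 q.2) {q : ℝ × ℝ | 0 < q.2} ∧
  ContinuousOn (fun q : ℝ × ℝ => partial_t u q.1 q.2) {q : ℝ × ℝ | 0 < q.2} ∧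
  ContinuousOn (fun q : ℝ × ℝ => partial_r u q.1 q.2) {q : ℝ × ℝ | 0 < q.2} ∧
  ContinuousOn (fun q : ℝ × ℝ => partial_rr u q.1 q.2) {q : ℝ × ℝ | 0 < q.2} ∧
  ContinuousOn (fun q : ℝ × ℝ => partial_tr u q.1 q.2) {q : ℝ × ℝ | 0 < q.2}

open Function

section PartialDerivatives

variable {φ : ℝ → ℝ → ℝ}

theorem hasDerivAt_uncurry_comp_fderiv {α β : ℝ → ℝ} {α' β' x : ℝ}
    (hφ : DifferentiableAt ℝ (uncurry φ) (α x, β x))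
    (hα : HasDerivAt α α' x) (hβ : HasDerivAt β β' x) :
    HasDerivAt (fun s => φ (α s) (β s)) (fderiv ℝ (uncurry φ) (α x, β x) (α', β')) x :=
  hφ.hasFDerivAt.comp_hasDerivAt (f := fun s => (α s, β s)) x (hα.prodMk hβ)

theorem partial_t_eq_fderiv {a b : ℝ} (hφ : DifferentiableAt ℝ (uncurry φ) (a, b)) :
    partial_t φ a b = fderiv ℝ (uncurry φ) (a, b) (1, 0) :=
  (hasDerivAt_uncurry_comp_fderiv hφ (hasDerivAt_id a) (hasDerivAt_const a b)).deriv

theorem partial_r_eq_fderiv {a b : ℝ} (hφ : DifferentiableAt ℝ (uncurry φ) (a, b)) :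
    partial_r φ a b = fderiv ℝ (uncurry φ) (a, b) (0, 1) :=
  (hasDerivAt_uncurry_comp_fderiv hφ (hasDerivAt_const b a) (hasDerivAt_id b)).deriv

theorem hasDerivAt_uncurry_comp {α β : ℝ → ℝ} {α' β' x : ℝ}
    (hφ : DifferentiableAt ℝ (uncurry φ) (α x, β x))
    (hα : HasDerivAt α α' x) (hβ : HasDerivAt β β' x) :
    HasDerivAt (fun s => φ (α s) (β s))
      (α' * partial_t φ (α x) (β x) + β' * partial_r φ (α x) (β x)) x := by
  have hsplit : ((α', β') : ℝ × ℝ) = α' • ((1 : ℝ), (0 : ℝ)) + β' • ((0 : ℝ), (1 : ℝ)) := by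
    simp
  refine (hasDerivAt_uncurry_comp_fderiv hφ hα hβ).congr_deriv ?_
  rw [hsplit, map_add, map_smul, map_smul, partial_t_eq_fderiv hφ, partial_r_eq_fderiv hφ,
    smul_eq_mul, smul_eq_mul]

theorem ContDiff.uncurry_partial_r {k : WithTop ℕ∞} (hφ : ContDiff ℝ (k + 1) (uncurry φ)) :
    ContDiff ℝ k (uncurry (partial_r φ)) := by
  have hd : Differentiable ℝ (uncurry φ) := hφ.differentiable (by simp)
  have hψ : uncurry (partial_r φ) = fun p => fderiv ℝ (uncurry φ) p (0, 1) := by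
    funext ⟨a, b⟩
    exact partial_r_eq_fderiv (hd (a, b))
  rw [hψ]
  exact (hφ.fderiv_right le_rfl).clm_apply contDiff_const

theorem partial_r_partial_r : partial_r (partial_r φ) = partial_rr φ := rfl

end PartialDerivatives

theorem hasDerivAt_pow_sub_one {n : ℕ} (hn : 1 ≤ n) {r : ℝ} (hr : r ≠ 0) :
    HasDerivAt (fun s : ℝ => s ^ (n - 1)) (((n : ℝ) - 1) / r * r ^ (n - 1)) r := by
  obtain ⟨m, rfl⟩ := Nat.exists_eq_add_of_le' hn
  rw [Nat.add_sub_cancel]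
  refine (hasDerivAt_pow m r).congr_deriv ?_
  rcases m with _ | k
  · simp
  · push_cast
    field_simp
    ring

theorem radial_conservation_law_phi_family_general (n : ℕ) (hn : 1 ≤ n) (κ : ℝ)
    (f : ℝ → ℝ)
    (φ : ℝ → ℝ → ℝ) (hφ : ContDiff ℝ 2 (Function.uncurry φ))
    (hlin : ∀ t z : ℝ, partial_t φ t z + κ * partial_rr φ t z + f z * partial_r φ t z = 0)
    (u : ℝ → ℝ → ℝ) (hu : IsC2On u)
    (hur : ∀ t r : ℝ, 0 < r → partial_r u t r ≠ 0)
    (hpde : ∀ t r : ℝ, 0 < r →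
      partial_t u t r
        = κ * (partial_rr u t r - (((n : ℝ) - 1) / r) * partial_r u t r)
            / (partial_r u t r) ^ 2 + f (u t r))
    (T X : ℝ → ℝ → ℝ)
    (hT : ∀ t r : ℝ, T t r = r ^ (n - 1) * φ t (u t r))
    (hX : ∀ t r : ℝ, X t r = κ * r ^ (n - 1) * partial_r φ t (u t r) / partial_r u t r) :
    ∀ t r : ℝ, 0 < r → partial_t T t r + partial_r X t r = 0 := by
  obtain ⟨hdiff_t, hdiff_r, hdiff_rr, -⟩ := hu
  intro t r hr
  have hφd : Differentiable ℝ (uncurry φ) := hφ.differentiable two_ne_zero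
  have hψd : Differentiable ℝ (uncurry (partial_r φ)) :=
    (ContDiff.uncurry_partial_r (k := 1) hφ).differentiable one_ne_zero
  have hu_t : HasDerivAt (fun s => u s r) (partial_t u t r) t := (hdiff_t t r hr).hasDerivAt
  have hu_r : HasDerivAt (fun s => u t s) (partial_r u t r) r := (hdiff_r t r hr).hasDerivAt
  have hu_rr : HasDerivAt (partial_r u t) (partial_rr u t r) r := (hdiff_rr t r hr).hasDerivAt
  have hTt : HasDerivAt (fun s => T s r) _ t :=
    ((hasDerivAt_uncurry_comp (hφd _) (hasDerivAt_id' t) hu_t).const_mul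
      (r ^ (n - 1))).congr_of_eventuallyEq (.of_forall fun s => hT s r)
  have hψr := hasDerivAt_uncurry_comp (hψd _) (hasDerivAt_const r t) hu_r
  rw [partial_r_partial_r] at hψr
  have hXr : HasDerivAt (fun s => X t s) _ r :=
    ((((hasDerivAt_pow_sub_one hn hr.ne').const_mul κ).fun_mul hψr).fun_div hu_rr
      (hur t r hr)).congr_of_eventuallyEq (.of_forall (hX t))
  rw [show partial_t T t r = _ from hTt.deriv, show partial_r X t r = _ from hXr.deriv,
    hpde t r hr]
  field_simp [hur t r hr]
  linear_combination r * r ^ (n - 1) * partial_r u t r ^ 2 * hlin t (u t r)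

/-- Infinite family of conservation laws of the radial nonlinear diffusion-reaction
equation in `n` dimensions with gradient diffusivity `g(|u_r|) = -κ/u_r²`. -/
theorem radial_conservation_law_phi_family (n : ℕ) (hn : 1 ≤ n) (κ : ℝ)
    (f : ℝ → ℝ) (hf : Continuous f)
    (φ : ℝ → ℝ → ℝ) (hφ : ContDiff ℝ 2 (Function.uncurry φ))
    (hlin : ∀ t z : ℝ, partial_t φ t z + κ * partial_rr φ t z + f z * partial_r φ t z = 0)
    (u : ℝ → ℝ → ℝ) (hu : IsC2On u)
    (hur : ∀ t r : ℝ, 0 < r → partial_r u t r ≠ 0)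
    (hpde : ∀ t r : ℝ, 0 < r →
      partial_t u t r
        = κ * (partial_rr u t r - (((n : ℝ) - 1) / r) * partial_r u t r)
            / (partial_r u t r) ^ 2 + f (u t r))
    (T X : ℝ → ℝ → ℝ)
    (hT : ∀ t r : ℝ, T t r = r ^ (n - 1) * φ t (u t r))
    (hX : ∀ t r : ℝ, X t r = κ * r ^ (n - 1) * partial_r φ t (u t r) / partial_r u t r) :
    ∀ t r : ℝ, 0 < r → partial_t T t r + partial_r X t r = 0 :=
  radial_conservation_law_phi_family_general n hn κ f φ hφ hlin u hu hur hpde T X hT hX
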